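/- Let A and B be finite sets of equal cardinality m in a metric space (𝒳, D), and let μ : A → B be a bijection. Then there exists a bijection μ̂ : A → B such that μ̂(x) = x for every x ∈ A ∩ B, and ∑_{x∈A} D(x, μ̂(x))² ≤ m · ∑_{x∈A} D(x, μ(x))². -/

import Mathlib

/-!
Fixing the points of `A ∩ B` one transposition at a time never increases the total (unsquared)
cost: if `x ∈ A ∩ B` is moved and `μ y = x`, then `μ ∘ swap x y` fixes `x`, sends `y` to `μ x`,
and `dist y (μ x) ≤ dist y x + dist x (μ x)`. The squared cost of the resulting `ν` is then at
most the square of its total cost, hence of `μ`'s total cost, which Cauchy–Schwarz bounds by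
`m` times the squared cost of `μ`.
-/

open Finset Equiv

section Swap

variable {α : Type*} [DecidableEq α]

lemma Finset.filter_comp_swap_ne_subset_erase (s : Finset α) {f : α → α} {x y : α}
    (hfy : f y = x) (hxy : x ≠ y) :
    {z ∈ s | f (swap x y z) ≠ z} ⊆ {z ∈ s | f z ≠ z}.erase x := by
  intro z
  simp only [mem_filter, mem_erase]
  rintro ⟨hz, hmoved⟩
  obtain rfl | hzx := eq_or_ne z x
  · exact absurd (by rw [swap_apply_left, hfy]) hmoved
  obtain rfl | hzy := eq_or_ne z y
  · exact ⟨hzx, hz, hfy ▸ hxy⟩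
  · exact ⟨hzx, hz, by rwa [swap_apply_of_ne_of_ne hzx hzy] at hmoved⟩

end Swap

section Matching

variable {X : Type*} [PseudoMetricSpace X] [DecidableEq X]

lemma sum_dist_comp_swap_le {s : Finset X} {f : X → X} {x y : X} (hx : x ∈ s) (hy : y ∈ s)
    (hfy : f y = x) : ∑ z ∈ s, dist z (f (swap x y z)) ≤ ∑ z ∈ s, dist z (f z) := by
  obtain rfl | hxy := eq_or_ne x y
  · simp
  have hpair : {x, y} ⊆ s := insert_subset hx (singleton_subset_iff.2 hy)
  have hoff : ∑ z ∈ s \ {x, y}, dist z (f (swap x y z)) = ∑ z ∈ s \ {x, y}, dist z (f z) := by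
    refine sum_congr rfl fun z hz => ?_
    simp only [mem_sdiff, mem_insert, mem_singleton, not_or] at hz
    rw [swap_apply_of_ne_of_ne hz.2.1 hz.2.2]
  rw [← sum_sdiff hpair, ← sum_sdiff hpair (f := fun z => dist z (f z)), hoff, sum_pair hxy,
    sum_pair hxy, swap_apply_left, swap_apply_right, hfy, dist_self, zero_add]
  linarith [dist_triangle y x (f x), dist_comm x y]

theorem exists_bijOn_fix_inter_sum_dist_le (A B : Finset X) (μ : X → X)
    (hμ : Set.BijOn μ ↑A ↑B) :
    ∃ ν : X → X, Set.BijOn ν ↑A ↑B ∧ (∀ x ∈ A ∩ B, ν x = x) ∧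
      ∑ x ∈ A, dist x (ν x) ≤ ∑ x ∈ A, dist x (μ x) := by
  induction hn : #{x ∈ A ∩ B | μ x ≠ x} using Nat.strong_induction_on generalizing μ with
  | _ n ih =>
    by_cases hfix : ∀ x ∈ A ∩ B, μ x = x
    · exact ⟨μ, hμ, hfix, le_rfl⟩
    push Not at hfix
    obtain ⟨x, hxAB, hμx⟩ := hfix
    obtain ⟨hxA, hxB⟩ := mem_inter.1 hxAB
    obtain ⟨y, hy, hyx⟩ := hμ.surjOn (mem_coe.2 hxB)
    have hxy : x ≠ y := fun h => hμx (h ▸ hyx)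
    have hμ' : Set.BijOn (μ ∘ swap x y) ↑A ↑B :=
      hμ.comp (bijOn_swap (mem_coe.2 hxA) hy)
    have hfewer : #{z ∈ A ∩ B | (μ ∘ swap x y) z ≠ z} < n :=
      hn ▸ (card_le_card (filter_comp_swap_ne_subset_erase _ hyx hxy)).trans_lt
        (card_erase_lt_of_mem (mem_filter.2 ⟨hxAB, hμx⟩))
    obtain ⟨ν, hν, hνfix, hνsum⟩ := ih _ hfewer _ hμ' rfl
    exact ⟨ν, hν, hνfix, hνsum.trans (sum_dist_comp_swap_le hxA hy hyx)⟩

end Matching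

theorem stmt_9_general {𝒳 : Type*} [MetricSpace 𝒳] [DecidableEq 𝒳] (m : ℕ)
    (A B : Finset 𝒳) (hA : A.card = m)
    (μ : 𝒳 → 𝒳) (hμ : Set.BijOn μ ↑A ↑B) :
    ∃ ν : 𝒳 → 𝒳, Set.BijOn ν ↑A ↑B ∧ (∀ x ∈ A ∩ B, ν x = x) ∧
      ∑ x ∈ A, dist x (ν x) ^ 2 ≤ (m : ℝ) * ∑ x ∈ A, dist x (μ x) ^ 2 := by
  obtain ⟨ν, hν, hfix, hsum⟩ := exists_bijOn_fix_inter_sum_dist_le A B μ hμ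
  refine ⟨ν, hν, hfix, ?_⟩
  calc ∑ x ∈ A, dist x (ν x) ^ 2 ≤ (∑ x ∈ A, dist x (ν x)) ^ 2 :=
        sum_sq_le_sq_sum_of_nonneg fun _ _ => dist_nonneg
    _ ≤ (∑ x ∈ A, dist x (μ x)) ^ 2 := by gcongr
    _ ≤ (m : ℝ) * ∑ x ∈ A, dist x (μ x) ^ 2 := hA ▸ sq_sum_le_card_mul_sum_sq

theorem stmt_9 {𝒳 : Type*} [MetricSpace 𝒳] [DecidableEq 𝒳] (m : ℕ)
    (A B : Finset 𝒳) (hA : A.card = m) (hB : B.card = m)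
    (μ : 𝒳 → 𝒳) (hμ : Set.BijOn μ ↑A ↑B) :
    ∃ ν : 𝒳 → 𝒳, Set.BijOn ν ↑A ↑B ∧ (∀ x ∈ A ∩ B, ν x = x) ∧
      ∑ x ∈ A, dist x (ν x) ^ 2 ≤ (m : ℝ) * ∑ x ∈ A, dist x (μ x) ^ 2 :=
  stmt_9_general m A B hA μ hμ
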